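/- arXiv:1801.06585 — 2 statements merged into one kernel-verified Lean document; each statement's English description precedes it below -/
import Mathlib

section
/- For every face F of a triangulation, the set Z(F) of zigzags containing edges of F consists of at most three pairs {Z, Z⁻¹} of mutually reversed zigzags. -/
open Finset

/-- A (combinatorial) triangulation of a connected closed surface:
a finite set of triangular faces such that every edge lies in exactly two
faces, two distinct faces meet in at most an edge, and the dual graph is
connected. -/
structure Triangulation (V : Type) [Fintype V] [DecidableEq V] where
  faces : Finset (Finset V)
  faces_nonempty : faces.Nonempty
  card_eq : ∀ F ∈ faces, F.card = 3
  edge_two_faces : ∀ e : Finset V, e.card = 2 → (∃ F ∈ faces, e ⊆ F) →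
      (faces.filter fun F => e ⊆ F).card = 2
  inter_le : ∀ F ∈ faces, ∀ F' ∈ faces, F ≠ F' → (F ∩ F').card ≤ 2
  connected : ∀ F ∈ faces, ∀ F' ∈ faces,
      Relation.ReflTransGen
        (fun A B => A ∈ faces ∧ B ∈ faces ∧ (A ∩ B).card = 2) F F'

namespace Triangulation

variable {V : Type} [Fintype V] [DecidableEq V] (T : Triangulation V)

/-- `e` is an edge of the triangulation. -/
def IsEdge (e : Finset V) : Prop := e.card = 2 ∧ ∃ F ∈ T.faces, e ⊆ F

/-- A zigzag sequence: consecutive edges are adjacent (distinct, sharing a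
vertex and a face), the faces containing consecutive pairs are distinct, and
edges two apart are disjoint. -/
def IsZigzagSeq (f : ℕ → Finset V) : Prop :=
  (∀ i, T.IsEdge (f i)) ∧
  (∀ i, f i ≠ f (i + 1) ∧ (f i ∩ f (i + 1)).Nonempty ∧
      ∃ F ∈ T.faces, f i ⊆ F ∧ f (i + 1) ⊆ F) ∧
  (∀ i, ∀ F ∈ T.faces, ∀ F' ∈ T.faces,
      f i ⊆ F → f (i + 1) ⊆ F → f (i + 1) ⊆ F' → f (i + 2) ⊆ F' → F ≠ F') ∧
  (∀ i, f i ∩ f (i + 2) = ∅)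

/-- A zigzag: a zigzag sequence together with its (minimal) period. -/
structure Zigzag where
  seq : ℕ → Finset V
  period : ℕ
  period_pos : 0 < period
  periodic : ∀ i, seq (i + period) = seq i
  period_min : ∀ m, 0 < m → (∀ i, seq (i + m) = seq i) → period ≤ m
  isZigzag : T.IsZigzagSeq seq

variable {T}

/-- Two zigzags are the same cyclic sequence (up to a shift). -/
def Zigzag.Equiv (Z Z' : T.Zigzag) : Prop := ∃ k, ∀ i, Z'.seq i = Z.seq (i + k)

/-- `Z'` is the reversal of `Z` (up to a shift). -/
def Zigzag.IsReverseOf (Z' Z : T.Zigzag) : Prop :=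
  ∃ k, ∀ i, Z'.seq i = Z.seq (k + Z.period - i % Z.period)

/-- The zigzag `Z` contains an edge of the face `F`. -/
def Zigzag.Meets (Z : T.Zigzag) (F : Finset V) : Prop := ∃ i, Z.seq i ⊆ F

/-- `F` is the `i`-th face of the face shadow of `Z`, i.e. the face containing
the `i`-th and `(i+1)`-st edges of `Z`. -/
def Zigzag.ShadowAt (Z : T.Zigzag) (i : ℕ) (F : Finset V) : Prop :=
  F ∈ T.faces ∧ Z.seq i ⊆ F ∧ Z.seq (i + 1) ⊆ F

/-- At position `i`, the zigzag `Z` traverses the oriented edge from `x`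
to `y` (the head `y` is the vertex shared with the next edge). -/
def Zigzag.Passes (Z : T.Zigzag) (i : ℕ) (x y : V) : Prop :=
  Z.seq i = {x, y} ∧ x ≠ y ∧ y ∈ Z.seq (i + 1)

variable (T)

/-- The triangulation is locally z-knotted in the face `F`:
`𝒵(F) = {Z, Z⁻¹}`. -/
def LocallyZKnotted (F : Finset V) : Prop :=
  (∃ Z : T.Zigzag, Z.Meets F) ∧
  ∀ Z Z' : T.Zigzag, Z.Meets F → Z'.Meets F → Z.Equiv Z' ∨ Z'.IsReverseOf Z

/-- The triangulation is z-knotted: it has exactly one zigzag up to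
reversal. -/
def ZKnotted : Prop :=
  Nonempty T.Zigzag ∧ ∀ Z Z' : T.Zigzag, Z.Equiv Z' ∨ Z'.IsReverseOf Z

/-- The z-monodromy relation of the face `F`: `M_F` sends the oriented edge
`(x,y)` of `F` to the oriented edge `(u,v)` of `F`.  Here `(u,v)` is the first
oriented edge of `F` occurring in the zigzag through `D_F⁻¹(x,y), (x,y)`
after `(x,y)`. -/
def MonodromyRel (F : Finset V) (x y u v : V) : Prop :=
  x ∈ F ∧ y ∈ F ∧
  ∃ Z : T.Zigzag, ∃ i j : ℕ,
    (∃ z, z ∈ F ∧ z ≠ x ∧ z ≠ y ∧ Z.Passes i z x) ∧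
    Z.Passes (i + 1) x y ∧
    i + 1 < j ∧ Z.Passes j u v ∧ u ∈ F ∧ v ∈ F ∧
    (∀ k, i + 1 < k → k < j → ∀ a b, a ∈ F → b ∈ F → ¬ Z.Passes k a b)

/-- The z-monodromy of `F` is the identity (type (M1)). -/
def MFIsId (F : Finset V) : Prop :=
  ∀ x y, x ∈ F → y ∈ F → x ≠ y → T.MonodromyRel F x y x y

/-- The z-monodromy of `F` is `D_F` (type (M2)). -/
def MFIsD (F : Finset V) : Prop :=
  ∀ x y z : V, ({x, y, z} : Finset V) = F → x ≠ y → y ≠ z → x ≠ z →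
    T.MonodromyRel F x y y z

/-- The z-monodromy of `F` is `D_F⁻¹` (type (M5)). -/
def MFIsDInv (F : Finset V) : Prop :=
  ∀ x y z : V, ({x, y, z} : Finset V) = F → x ≠ y → y ≠ z → x ≠ z →
    T.MonodromyRel F x y z x

/-- The z-monodromy of `F` is of type (M3):
`M_F = (-e₁,e₂,e₃)(-e₃,-e₂,e₁)` for a cycle `(e₁,e₂,e₃)` of `D_F`. -/
def MFIsM3 (F : Finset V) : Prop :=
  ∃ x y z : V, ({x, y, z} : Finset V) = F ∧ x ≠ y ∧ y ≠ z ∧ x ≠ z ∧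
    T.MonodromyRel F y x y z ∧ T.MonodromyRel F y z z x ∧
    T.MonodromyRel F z x y x ∧ T.MonodromyRel F x z z y ∧
    T.MonodromyRel F z y x y ∧ T.MonodromyRel F x y x z

/-- The z-monodromy of `F` is of type (M4):
`M_F = (e₁,-e₂)(e₂,-e₁)` with `e₃, -e₃` fixed, for a cycle `(e₁,e₂,e₃)`
of `D_F`. -/
def MFIsM4 (F : Finset V) : Prop :=
  ∃ x y z : V, ({x, y, z} : Finset V) = F ∧ x ≠ y ∧ y ≠ z ∧ x ≠ z ∧
    T.MonodromyRel F x y z y ∧ T.MonodromyRel F z y x y ∧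
    T.MonodromyRel F y z y x ∧ T.MonodromyRel F y x y z ∧
    T.MonodromyRel F z x z x ∧ T.MonodromyRel F x z x z

/-- The dual graph: vertices are faces, adjacent iff they share an edge. -/
def dualGraph : SimpleGraph {F : Finset V // F ∈ T.faces} where
  Adj A B := A ≠ B ∧ ((A : Finset V) ∩ (B : Finset V)).card = 2
  symm := by
    constructor
    intro A B h
    exact ⟨h.1.symm, by rw [Finset.inter_comm]; exact h.2⟩
  loopless := by constructor; intro A h; exact h.1 rfl

end Triangulation

/-!
A zigzag is determined by any two consecutive edges: the edge after `a, b` must lie in the face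
on the other side of `b` and avoid the vertex shared by `a` and `b`, and symmetrically for the
edge before. A zigzag through a face `F` passes through two consecutive edges of `F`, and the six
ordered pairs of distinct edges of the triangle `F` form three pairs `(a, b)`, `(b, a)`; the
zigzag read from `(b, a)` is the reverse of the one read from `(a, b)`. Conversely every pair of
distinct edges of a face starts a zigzag, because the successor map on such pairs is injective on
a finite set and hence periodic.
-/

theorem Finset.union_eq_of_card_eq_two {α : Type*} [DecidableEq α] {s a b : Finset α}
    (hs : s.card = 3) (ha : a.card = 2) (hb : b.card = 2) (has : a ⊆ s) (hbs : b ⊆ s)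
    (hab : a ≠ b) : a ∪ b = s := by
  refine Finset.eq_of_subset_of_card_le (Finset.union_subset has hbs) ?_
  have hlt : a ⊂ a ∪ b := Finset.ssubset_iff_subset_ne.2 ⟨Finset.subset_union_left, fun h =>
    hab (Finset.eq_of_subset_of_card_le (h ▸ Finset.subset_union_right) (by omega)).symm⟩
  have := Finset.card_lt_card hlt
  omega

theorem Finset.eq_erase_of_card_eq_two {α : Type*} [DecidableEq α] {s c : Finset α} {u : α}
    (hs : s.card = 3) (hc : c.card = 2) (hcs : c ⊆ s) (hu : u ∈ s) (huc : u ∉ c) :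
    c = s.erase u :=
  Finset.eq_of_subset_of_card_le (Finset.subset_erase.2 ⟨hcs, huc⟩)
    (by rw [Finset.card_erase_of_mem hu]; omega)

theorem Finset.eq_or_eq_or_eq_of_card_eq_two {α : Type*} [DecidableEq α] {x y z : α}
    {s : Finset α} (hs : s.card = 2) (hsub : s ⊆ {x, y, z}) :
    s = {x, y} ∨ s = {y, z} ∨ s = {z, x} := by
  obtain ⟨a, b, hab, rfl⟩ := Finset.card_eq_two.mp hs
  have ha : a ∈ ({x, y, z} : Finset α) := hsub (by simp)
  have hb : b ∈ ({x, y, z} : Finset α) := hsub (by simp)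
  simp only [Finset.mem_insert, Finset.mem_singleton] at ha hb
  rcases ha with rfl | rfl | rfl <;> rcases hb with rfl | rfl | rfl <;>
    simp_all [Finset.pair_comm]

namespace Triangulation

variable {V : Type} [Fintype V] [DecidableEq V] {T : Triangulation V}

theorem face_eq_of_edges_subset {F G a b : Finset V} (hF : F ∈ T.faces) (hG : G ∈ T.faces)
    (ha : a.card = 2) (hb : b.card = 2) (hab : a ≠ b)
    (haF : a ⊆ F) (hbF : b ⊆ F) (haG : a ⊆ G) (hbG : b ⊆ G) : F = G := by
  rw [← Finset.union_eq_of_card_eq_two (T.card_eq F hF) ha hb haF hbF hab,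
    Finset.union_eq_of_card_eq_two (T.card_eq G hG) ha hb haG hbG hab]

theorem exists_face_ne {e G : Finset V} (he : e.card = 2) (hG : G ∈ T.faces) (heG : e ⊆ G) :
    ∃ H ∈ T.faces, e ⊆ H ∧ H ≠ G := by
  have hcard := T.edge_two_faces e he ⟨G, hG, heG⟩
  obtain ⟨H, hH, hHG⟩ := Finset.exists_mem_ne (by omega : 1 < (T.faces.filter (e ⊆ ·)).card) G
  exact ⟨H, (Finset.mem_filter.1 hH).1, (Finset.mem_filter.1 hH).2, hHG⟩

theorem eq_or_eq_of_edge_subset {e F G H : Finset V} (he : e.card = 2)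
    (hG : G ∈ T.faces) (heG : e ⊆ G) (hH : H ∈ T.faces) (heH : e ⊆ H) (hGH : G ≠ H)
    (hF : F ∈ T.faces) (heF : e ⊆ F) : F = G ∨ F = H := by
  have hpair : ({G, H} : Finset (Finset V)) = T.faces.filter (e ⊆ ·) :=
    Finset.eq_of_subset_of_card_le
      (Finset.insert_subset_iff.2 ⟨Finset.mem_filter.2 ⟨hG, heG⟩,
        Finset.singleton_subset_iff.2 (Finset.mem_filter.2 ⟨hH, heH⟩)⟩)
      (by rw [T.edge_two_faces e he ⟨G, hG, heG⟩, Finset.card_pair hGH])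
  have hmem : F ∈ ({G, H} : Finset (Finset V)) := by rw [hpair]; exact Finset.mem_filter.2 ⟨hF, heF⟩
  simpa using hmem

variable (T) in
/-- Two edges that may follow each other in a zigzag. -/
def IsAdjacent (a b : Finset V) : Prop :=
  T.IsEdge a ∧ T.IsEdge b ∧ a ≠ b ∧ (a ∩ b).Nonempty ∧ ∃ F ∈ T.faces, a ⊆ F ∧ b ⊆ F

variable (T) in
def IsZigzagTriple (a b c : Finset V) : Prop :=
  T.IsAdjacent a b ∧ T.IsAdjacent b c ∧
    (∀ F ∈ T.faces, ∀ F' ∈ T.faces, a ⊆ F → b ⊆ F → b ⊆ F' → c ⊆ F' → F ≠ F') ∧ a ∩ c = ∅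

theorem isAdjacent_of_subset_face {F a b : Finset V} (hF : F ∈ T.faces)
    (ha : a.card = 2) (hb : b.card = 2) (haF : a ⊆ F) (hbF : b ⊆ F) (hab : a ≠ b) :
    T.IsAdjacent a b := by
  have hinter : (a ∩ b).Nonempty := by
    rw [← Finset.card_pos]
    have := Finset.card_union_add_card_inter a b
    have := Finset.card_le_card (Finset.union_subset haF hbF)
    have := T.card_eq F hF
    omega
  exact ⟨⟨ha, F, hF, haF⟩, ⟨hb, F, hF, hbF⟩, hab, hinter, F, hF, haF, hbF⟩

theorem IsAdjacent.symm {a b : Finset V} (h : T.IsAdjacent a b) : T.IsAdjacent b a :=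
  let ⟨ha, hb, hab, hint, F, hF, haF, hbF⟩ := h
  ⟨hb, ha, hab.symm, Finset.inter_comm a b ▸ hint, F, hF, hbF, haF⟩

theorem IsZigzagTriple.symm {a b c : Finset V} (h : T.IsZigzagTriple a b c) :
    T.IsZigzagTriple c b a :=
  let ⟨hab, hbc, hfaces, hac⟩ := h
  ⟨hbc.symm, hab.symm, fun F hF F' hF' hcF hbF hbF' haF' =>
    (hfaces F' hF' F hF haF' hbF' hbF hcF).symm, Finset.inter_comm a c ▸ hac⟩

/-- `c` is the face across `b` from `a` with the common vertex of `a` and `b` removed. -/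
theorem IsZigzagTriple.eq {a b c c' : Finset V} (h : T.IsZigzagTriple a b c)
    (h' : T.IsZigzagTriple a b c') : c = c' := by
  obtain ⟨⟨-, hb, -, ⟨u, hu⟩, G, hG, haG, hbG⟩, ⟨-, hc, -, -, H, hH, hbH, hcH⟩, hfaces, hac⟩ := h
  obtain ⟨-, ⟨-, hc', -, -, H', hH', hbH', hcH'⟩, hfaces', hac'⟩ := h'
  rw [Finset.mem_inter] at hu
  have hGH : G ≠ H := hfaces G hG H hH haG hbG hbH hcH
  have hGH' : G ≠ H' := hfaces' G hG H' hH' haG hbG hbH' hcH'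
  have hH'H : H' = H :=
    (eq_or_eq_of_edge_subset hb.1 hG hbG hH hbH hGH hH' hbH').resolve_left hGH'.symm
  rw [hH'H] at hcH'
  have huc : ∀ {d}, a ∩ d = ∅ → u ∉ d := fun had hud =>
    Finset.notMem_empty u (had ▸ Finset.mem_inter.2 ⟨hu.1, hud⟩)
  rw [Finset.eq_erase_of_card_eq_two (T.card_eq H hH) hc.1 hcH (hbH hu.2) (huc hac),
    Finset.eq_erase_of_card_eq_two (T.card_eq H hH) hc'.1 hcH' (hbH hu.2) (huc hac')]

theorem IsAdjacent.exists_isZigzagTriple {a b : Finset V} (h : T.IsAdjacent a b) :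
    ∃ c, T.IsZigzagTriple a b c := by
  obtain ⟨ha, hb, hab, ⟨u, hu⟩, G, hG, haG, hbG⟩ := h
  rw [Finset.mem_inter] at hu
  obtain ⟨H, hH, hbH, hHG⟩ := exists_face_ne hb.1 hG hbG
  have huH : u ∈ H := hbH hu.2
  have hc : (H.erase u).card = 2 := by rw [Finset.card_erase_of_mem huH, T.card_eq H hH]
  have hbc : b ≠ H.erase u := fun h => Finset.notMem_erase u H (h ▸ hu.2)
  have hadj : T.IsAdjacent b (H.erase u) :=
    isAdjacent_of_subset_face hH hb.1 hc hbH (Finset.erase_subset u H) hbc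
  refine ⟨H.erase u, ⟨ha, hb, hab, ⟨u, Finset.mem_inter.2 hu⟩, G, hG, haG, hbG⟩, hadj, ?_, ?_⟩
  · intro F hF F' hF' haF hbF hbF' hcF'
    rw [face_eq_of_edges_subset hF hG ha.1 hb.1 hab haF hbF haG hbG,
      face_eq_of_edges_subset hF' hH hb.1 hc hbc hbF' hcF' hbH (Finset.erase_subset u H)]
    exact hHG.symm
  · -- a second common vertex of `a` and `H` would put `a` in both faces through `b`
    refine Finset.eq_empty_of_forall_notMem fun w hw => hHG ?_
    obtain ⟨hwa, hwH⟩ := Finset.mem_inter.1 hw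
    obtain ⟨hwu, hwH⟩ := Finset.mem_erase.1 hwH
    have hpair : {w, u} = a := Finset.eq_of_subset_of_card_le
      (Finset.insert_subset_iff.2 ⟨hwa, Finset.singleton_subset_iff.2 hu.1⟩)
      (by rw [ha.1, Finset.card_pair hwu])
    have haH : a ⊆ H := hpair ▸ Finset.insert_subset_iff.2 ⟨hwH, Finset.singleton_subset_iff.2 huH⟩
    exact face_eq_of_edges_subset hH hG ha.1 hb.1 hab haH hbH haG hbG

theorem isZigzagSeq_iff {f : ℕ → Finset V} :
    T.IsZigzagSeq f ↔ ∀ i, T.IsZigzagTriple (f i) (f (i + 1)) (f (i + 2)) := by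
  constructor
  · rintro ⟨hedge, hadj, hfaces, hdisj⟩ i
    exact ⟨⟨hedge i, hedge (i + 1), hadj i⟩, ⟨hedge (i + 1), hedge (i + 2), hadj (i + 1)⟩,
      hfaces i, hdisj i⟩
  · intro h
    exact ⟨fun i => (h i).1.1, fun i => (h i).1.2.2, fun i => (h i).2.2.1, fun i => (h i).2.2.2⟩

theorem IsZigzagSeq.eq_add_of_eq {f g : ℕ → Finset V} (hf : T.IsZigzagSeq f)
    (hg : T.IsZigzagSeq g) {i j : ℕ} (h₀ : f i = g j) (h₁ : f (i + 1) = g (j + 1)) (n : ℕ) :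
    f (i + n) = g (j + n) := by
  suffices ∀ n, f (i + n) = g (j + n) ∧ f (i + n + 1) = g (j + n + 1) from (this n).1
  intro n
  induction n with
  | zero => exact ⟨h₀, h₁⟩
  | succ n ih =>
    have hg' := isZigzagSeq_iff.1 hg (j + n)
    rw [← ih.1, ← ih.2] at hg'
    exact ⟨ih.2, (isZigzagSeq_iff.1 hf (i + n)).eq hg'⟩

end Triangulation

theorem Function.Periodic.eq_of_forall_add_eq {α : Type*} {f g : ℕ → α} {p q m : ℕ}
    (hf : Function.Periodic f p) (hg : Function.Periodic g q) (hp : 0 < p) (hq : 0 < q)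
    (h : ∀ n, f (m + n) = g (m + n)) : f = g := by
  funext i
  have hm : m ≤ m * q * p := Nat.le_mul_of_pos_right _ hp |>.trans' (Nat.le_mul_of_pos_right _ hq)
  have hfg := h (i + m * q * p - m)
  rw [show m + (i + m * q * p - m) = i + m * q * p by omega] at hfg
  calc f i = f (i + m * q * p) := (hf.nat_mul (m * q) i).symm
    _ = g (i + m * q * p) := hfg
    _ = g i := by rw [show m * q * p = m * p * q by ring]; exact hg.nat_mul (m * p) i

theorem Function.Periodic.eq_of_natCast_eq {α : Type*} {f : ℕ → α} {p a b : ℕ}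
    (hf : Function.Periodic f p) (h : (a : ZMod p) = b) : f a = f b := by
  rw [← hf.map_mod_nat a, ← hf.map_mod_nat b, (ZMod.natCast_eq_natCast_iff' a b p).1 h]

theorem ZMod.natCast_add_sub_mod {p : ℕ} (hp : 0 < p) (k i : ℕ) :
    ((k + p - i % p : ℕ) : ZMod p) = k - i := by
  rw [Nat.cast_sub (by have := Nat.mod_lt i hp; omega), Nat.cast_add, ZMod.natCast_self,
    ZMod.natCast_mod, add_zero]

namespace Triangulation

variable {V : Type} [Fintype V] [DecidableEq V] {T : Triangulation V}

theorem IsZigzagSeq.reverse {g : ℕ → Finset V} {p : ℕ} (hg : T.IsZigzagSeq g)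
    (hper : Function.Periodic g p) (hp : 0 < p) (k : ℕ) :
    T.IsZigzagSeq fun i => g (k + p - i % p) := by
  have : NeZero p := ⟨hp.ne'⟩
  rw [isZigzagSeq_iff] at hg ⊢
  intro i
  have hj : (((k - i - 2 : ZMod p).val : ℕ) : ZMod p) = k - i - 2 := ZMod.natCast_zmod_val _
  convert (hg (k - i - 2 : ZMod p).val).symm using 1 <;>
    refine hper.eq_of_natCast_eq ?_ <;>
    push_cast [ZMod.natCast_add_sub_mod hp, hj] <;> ring

namespace Zigzag

theorem equiv_of_seq_eq {Z W : T.Zigzag} {m : ℕ} (h₀ : W.seq 0 = Z.seq m)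
    (h₁ : W.seq 1 = Z.seq (m + 1)) : Z.Equiv W :=
  ⟨m, fun i => by
    simpa [Nat.add_comm m] using IsZigzagSeq.eq_add_of_eq W.isZigzag Z.isZigzag h₀ h₁ i⟩

theorem isReverseOf_of_seq_eq {Z W : T.Zigzag} {m : ℕ} (h₀ : Z.seq m = W.seq 1)
    (h₁ : Z.seq (m + 1) = W.seq 0) : Z.IsReverseOf W := by
  have hp := W.period_pos
  set r : ℕ → Finset V := fun i => W.seq (m + 1 + W.period - i % W.period) with hr
  have hr_per : Function.Periodic r W.period := fun i => by simp only [hr, Nat.add_mod_right]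
  have hr_apply (i n : ℕ) (h : (n : ZMod W.period) = m + 1 - i) : W.seq n = r i :=
    Function.Periodic.eq_of_natCast_eq W.periodic (by
      rw [h, ZMod.natCast_add_sub_mod hp]; push_cast; ring)
  have hZr := IsZigzagSeq.eq_add_of_eq Z.isZigzag (W.isZigzag.reverse W.periodic hp (m + 1))
    (h₀.trans (hr_apply m 1 (by ring))) (h₁.trans (hr_apply (m + 1) 0 (by push_cast; ring)))
  exact ⟨m + 1,
    congrFun (Function.Periodic.eq_of_forall_add_eq Z.periodic hr_per Z.period_pos hp hZr)⟩

theorem equiv_or_isReverseOf {Z W : T.Zigzag} {m : ℕ}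
    (h : s(Z.seq m, Z.seq (m + 1)) = s(W.seq 0, W.seq 1)) : Z.Equiv W ∨ Z.IsReverseOf W := by
  rcases Sym2.eq_iff.1 h with ⟨h₀, h₁⟩ | ⟨h₀, h₁⟩
  · exact Or.inl (equiv_of_seq_eq h₀.symm h₁.symm)
  · exact Or.inr (isReverseOf_of_seq_eq h₀ h₁)

theorem exists_seq_subset_of_meets (Z : T.Zigzag) {F : Finset V} (hF : F ∈ T.faces)
    (h : Z.Meets F) : ∃ m, Z.seq m ⊆ F ∧ Z.seq (m + 1) ⊆ F := by
  obtain ⟨i, hi⟩ := h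
  obtain ⟨n, hn⟩ : ∃ n, n + 1 = i + Z.period := ⟨i + Z.period - 1, by have := Z.period_pos; omega⟩
  rw [← Z.periodic, ← hn] at hi
  obtain ⟨⟨-, -, -, -, G, hG, hG₀, hG₁⟩, ⟨he, -, -, -, H, hH, hH₁, hH₂⟩, hGH, -⟩ :=
    isZigzagSeq_iff.1 Z.isZigzag n
  rcases eq_or_eq_of_edge_subset he.1 hG hG₁ hH hH₁ (hGH G hG H hH hG₀ hG₁ hH₁ hH₂) hF hi
    with rfl | rfl
  · exact ⟨n, hG₀, hG₁⟩
  · exact ⟨n + 1, hH₁, hH₂⟩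

open Classical in
noncomputable def ofPeriodic (f : ℕ → Finset V) (hf : T.IsZigzagSeq f)
    (hper : ∃ p, 0 < p ∧ Function.Periodic f p) : T.Zigzag where
  seq := f
  period := Nat.find hper
  period_pos := (Nat.find_spec hper).1
  periodic := (Nat.find_spec hper).2
  period_min _ hm hmper := Nat.find_min' hper ⟨hm, hmper⟩
  isZigzag := hf

end Zigzag

variable (T) in
/-- The pairs of consecutive edges, the states of a zigzag. -/
abbrev AdjacentPair := {e : Finset V × Finset V // T.IsAdjacent e.1 e.2}

namespace AdjacentPair

noncomputable def next (s : T.AdjacentPair) : T.AdjacentPair :=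
  ⟨(s.1.2, s.2.exists_isZigzagTriple.choose), s.2.exists_isZigzagTriple.choose_spec.2.1⟩

theorem isZigzagTriple_next (s : T.AdjacentPair) : T.IsZigzagTriple s.1.1 s.1.2 s.next.1.2 :=
  s.2.exists_isZigzagTriple.choose_spec

theorem next_injective : Function.Injective (next (T := T)) := by
  intro s s' h
  have hb : s.1.2 = s'.1.2 := congrArg (fun t => t.1.1) h
  have h' := s'.isZigzagTriple_next
  rw [← h, ← hb] at h'
  exact Subtype.ext (Prod.ext (s.isZigzagTriple_next.symm.eq h'.symm) hb)

noncomputable def seq (s : T.AdjacentPair) (n : ℕ) : Finset V := (next^[n] s).1.1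

theorem seq_succ (s : T.AdjacentPair) (n : ℕ) : s.seq (n + 1) = (next^[n] s).1.2 := by
  rw [seq, Function.iterate_succ_apply']
  rfl

theorem isZigzagSeq_seq (s : T.AdjacentPair) : T.IsZigzagSeq s.seq := by
  refine isZigzagSeq_iff.2 fun n => ?_
  rw [seq_succ, seq_succ, Function.iterate_succ_apply']
  exact isZigzagTriple_next _

theorem exists_periodic_seq (s : T.AdjacentPair) : ∃ p, 0 < p ∧ Function.Periodic s.seq p := by
  obtain ⟨p, hp, hps⟩ := next_injective.mem_periodicPts s
  exact ⟨p, hp, fun n => by rw [seq, Function.iterate_add_apply, hps.eq]; rfl⟩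

noncomputable def toZigzag (s : T.AdjacentPair) : T.Zigzag :=
  Zigzag.ofPeriodic s.seq s.isZigzagSeq_seq s.exists_periodic_seq

end AdjacentPair

theorem exists_zigzag_seq_eq {F : Finset V} {u v w : V} (hF : F ∈ T.faces) (hu : u ∈ F)
    (hv : v ∈ F) (hw : w ∈ F) (huv : u ≠ v) (huw : u ≠ w) (hvw : v ≠ w) :
    ∃ Z : T.Zigzag, s(Z.seq 0, Z.seq 1) = s({u, v}, {v, w}) := by
  have hne : ({u, v} : Finset V) ≠ {v, w} :=
    ne_of_mem_of_not_mem' (Finset.mem_insert_self u _) (by simp [huv, huw])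
  have hadj := isAdjacent_of_subset_face hF (Finset.card_pair huv) (Finset.card_pair hvw)
    (by simp [Finset.insert_subset_iff, hu, hv]) (by simp [Finset.insert_subset_iff, hv, hw]) hne
  exact ⟨AdjacentPair.toZigzag ⟨({u, v}, {v, w}), hadj⟩, rfl⟩

end Triangulation

theorem Finset.sym2_eq_of_subset_triangle {V : Type} [DecidableEq V] {x y z : V} {a b : Finset V}
    (ha : a.card = 2) (hb : b.card = 2) (haF : a ⊆ {x, y, z}) (hbF : b ⊆ {x, y, z})
    (hab : a ≠ b) :
    s(a, b) = s({x, y}, {y, z}) ∨ s(a, b) = s({y, z}, {z, x}) ∨ s(a, b) = s({z, x}, {x, y}) := by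
  rcases Finset.eq_or_eq_or_eq_of_card_eq_two ha haF with rfl | rfl | rfl <;>
    rcases Finset.eq_or_eq_or_eq_of_card_eq_two hb hbF with rfl | rfl | rfl <;>
    simp_all [Sym2.eq_swap]

/-- the set `𝒵(F)` of zigzags meeting a face `F` consists of at
most three pairs `{Z, Z⁻¹}` of mutually reversed zigzags. -/
theorem zigzags_through_face_at_most_three_pairs
    {V : Type} [Fintype V] [DecidableEq V]
    (T : Triangulation V) (F : Finset V) (hF : F ∈ T.faces) :
    ∃ Z₁ Z₂ Z₃ : T.Zigzag, ∀ Z : T.Zigzag, Z.Meets F →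
      (Z.Equiv Z₁ ∨ Z.IsReverseOf Z₁) ∨ (Z.Equiv Z₂ ∨ Z.IsReverseOf Z₂) ∨
      (Z.Equiv Z₃ ∨ Z.IsReverseOf Z₃) := by
  obtain ⟨x, y, z, hxy, hxz, hyz, rfl⟩ := Finset.card_eq_three.1 (T.card_eq F hF)
  obtain ⟨Z₁, h₁⟩ :=
    Triangulation.exists_zigzag_seq_eq hF (by simp) (by simp) (by simp) hxy hxz hyz
  obtain ⟨Z₂, h₂⟩ :=
    Triangulation.exists_zigzag_seq_eq hF (by simp) (by simp) (by simp) hyz hxy.symm hxz.symm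
  obtain ⟨Z₃, h₃⟩ :=
    Triangulation.exists_zigzag_seq_eq hF (by simp) (by simp) (by simp) hxz.symm hyz.symm hxy
  refine ⟨Z₁, Z₂, Z₃, fun Z hZ => ?_⟩
  obtain ⟨m, ha, hb⟩ := Z.exists_seq_subset_of_meets hF hZ
  rcases Finset.sym2_eq_of_subset_triangle (Z.isZigzag.1 m).1
    (Z.isZigzag.1 (m + 1)).1 ha hb (Z.isZigzag.2.1 m).1 with h | h | h
  · exact Or.inl (Triangulation.Zigzag.equiv_or_isReverseOf (h.trans h₁.symm))
  · exact Or.inr (Or.inl (Triangulation.Zigzag.equiv_or_isReverseOf (h.trans h₂.symm)))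
  · exact Or.inr (Or.inr (Triangulation.Zigzag.equiv_or_isReverseOf (h.trans h₃.symm)))
end

section
/- Let F and F' be adjacent faces of a triangulation whose z-monodromies M_F and M_{F'} are both the identity permutation. Then there is a unique (up to reversal) zigzag whose face shadow contains both F and F', and this face shadow is a cyclic sequence of the form F, F', ..., F', ..., F', F, ..., F, ..., i.e., the three occurrences of F' all appear between the first and second occurrences of F. -/
open Finset

/-!
A zigzag is determined by any two consecutive edges, read forwards or backwards. If `M_F = id`
and a zigzag runs `tx, xy` through `F = {x, y, t}`, it next meets `F` running `xy, yt`, then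
`yt, tx`, then `tx, xy` again, which closes a period: the face shadow passes through `F` exactly
three times per period, and every ordered pair of edges of `F` occurs consecutively in the
zigzag or in its reverse, whence uniqueness. Between `tx, xy` and `xy, yt` the zigzag leaves `F`
into `F' = {x, y, w}` and comes back; the same argument for `F'` shows that its three passes
`xy, yw`, `yw, wx`, `wx, xy` fill this gap, the last one immediately before `xy, yt`.
-/

namespace Finset

variable {α : Type*} [DecidableEq α]

theorem eq_pair_of_subset_of_notMem {e : Finset α} {a b c : α}
    (he : e.card = 2) (hsub : e ⊆ {a, b, c}) (ha : a ∉ e) : e = {b, c} := by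
  refine eq_of_subset_of_card_le (fun v hv => ?_) (he ▸ card_le_two)
  have := hsub hv
  simp only [mem_insert, mem_singleton] at this ⊢
  rcases this with rfl | h
  · exact absurd hv ha
  · exact h

theorem eq_pair_of_subset_triple {e : Finset α} {a b c : α}
    (he : e.card = 2) (hsub : e ⊆ {a, b, c}) : e = {a, b} ∨ e = {b, c} ∨ e = {c, a} := by
  obtain ⟨p, q, hpq, rfl⟩ := card_eq_two.mp he
  simp only [insert_subset_iff, mem_insert, mem_singleton, singleton_subset_iff] at hsub
  obtain ⟨hp | hp | hp, hq | hq | hq⟩ := hsub <;> subst hp hq <;>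
    simp_all [pair_comm]

theorem eq_sdiff_of_subset {e₀ e₁ e₂ B : Finset α}
    (hB : B.card = 3) (he₂ : e₂.card = 2) (h₁B : e₁ ⊆ B) (h₂B : e₂ ⊆ B)
    (h₀₁ : (e₀ ∩ e₁).Nonempty) (h₀₂ : Disjoint e₀ e₂) : e₂ = B \ e₀ := by
  obtain ⟨v, hv⟩ := h₀₁
  have hvB : v ∈ B := h₁B (mem_inter.mp hv).2
  refine eq_of_subset_of_card_le (subset_sdiff.mpr ⟨h₂B, h₀₂.symm⟩) ?_
  calc (B \ e₀).card ≤ (B.erase v).card :=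
        card_le_card fun u hu => mem_erase.mpr
          ⟨fun h => (mem_sdiff.mp hu).2 (h ▸ (mem_inter.mp hv).1), (mem_sdiff.mp hu).1⟩
    _ = e₂.card := by rw [card_erase_of_mem hvB, hB, he₂]

end Finset

theorem Function.Periodic.eq_of_eventuallyEq {α : Type*} {f g : ℕ → α} {p q : ℕ}
    (hf : Function.Periodic f p) (hg : Function.Periodic g q) (hp : 0 < p) (hq : 0 < q)
    (h : f =ᶠ[Filter.atTop] g) : f = g := by
  obtain ⟨N, hN⟩ := Filter.eventually_atTop.mp h
  funext n
  have hNpq : N ≤ n + N * q * p :=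
    le_add_left (mul_assoc N q p ▸ Nat.le_mul_of_pos_right _ (Nat.mul_pos hq hp))
  calc f n = f (n + N * q * p) := ((hf.nat_mul (N * q)) n).symm
    _ = g (n + N * p * q) := by rw [hN _ hNpq, mul_right_comm]
    _ = g n := (hg.nat_mul (N * p)) n

namespace Triangulation

variable {V : Type} [Fintype V] [DecidableEq V] {T : Triangulation V} {F : Finset V}

theorem eq_or_eq_of_subset {e A B C : Finset V} (he : e.card = 2)
    (hA : A ∈ T.faces) (hB : B ∈ T.faces) (hC : C ∈ T.faces)
    (heA : e ⊆ A) (heB : e ⊆ B) (heC : e ⊆ C) (hAB : A ≠ B) : C = A ∨ C = B := by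
  by_contra! h
  have hsub : ({A, B, C} : Finset (Finset V)) ⊆ T.faces.filter (e ⊆ ·) := by
    simp [insert_subset_iff, hA, hB, hC, heA, heB, heC]
  have := card_le_card hsub
  rw [T.edge_two_faces e he ⟨A, hA, heA⟩,
    card_eq_three.mpr ⟨A, B, C, hAB, h.1.symm, h.2.symm, rfl⟩] at this
  omega

theorem face_eq_of_mem (hF : F ∈ T.faces) {a b c : V} (ha : a ∈ F) (hb : b ∈ F)
    (hc : c ∈ F) (hab : a ≠ b) (hac : a ≠ c) (hbc : b ≠ c) : F = {a, b, c} :=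
  (eq_of_subset_of_card_le (by simp [insert_subset_iff, ha, hb, hc])
    (by rw [T.card_eq F hF, card_eq_three.mpr ⟨a, b, c, hab, hac, hbc, rfl⟩])).symm

theorem exists_mem_ne_ne (hF : F ∈ T.faces) (x y : V) : ∃ t ∈ F, t ≠ x ∧ t ≠ y := by
  obtain ⟨t, htF, ht⟩ := exists_mem_notMem_of_card_lt_card (s := {x, y})
    (card_le_two.trans_lt (by rw [T.card_eq F hF]; omega))
  simp only [mem_insert, mem_singleton, not_or] at ht
  exact ⟨t, htF, ht⟩

theorem eq_of_mem_of_ne_of_ne (hF : F ∈ T.faces) {a b c v : V} (ha : a ∈ F) (hb : b ∈ F)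
    (hc : c ∈ F) (hab : a ≠ b) (hac : a ≠ c) (hbc : b ≠ c) (hv : v ∈ F) (hva : v ≠ a)
    (hvb : v ≠ b) : v = c := by
  rw [T.face_eq_of_mem hF ha hb hc hab hac hbc] at hv
  simp_all

namespace IsZigzagSeq

variable {f g : ℕ → Finset V}

theorem card_eq_two (hf : T.IsZigzagSeq f) (i : ℕ) : (f i).card = 2 := (hf.1 i).1

theorem eq_union_of_subset (hf : T.IsZigzagSeq f) {i : ℕ} {G : Finset V} (hG : G ∈ T.faces)
    (h₀ : f i ⊆ G) (h₁ : f (i + 1) ⊆ G) : G = f i ∪ f (i + 1) := by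
  have hne : f i ∪ f (i + 1) ≠ f i := fun h => (hf.2.1 i).1
    (eq_of_subset_of_card_le (union_eq_left.mp h) (by rw [hf.card_eq_two, hf.card_eq_two])).symm
  have := card_lt_card (subset_union_left.ssubset_of_ne hne.symm)
  rw [hf.card_eq_two] at this
  exact (eq_of_subset_of_card_le (union_subset h₀ h₁) (by rw [T.card_eq G hG]; omega)).symm

theorem union_mem_faces (hf : T.IsZigzagSeq f) (i : ℕ) : f i ∪ f (i + 1) ∈ T.faces := by
  obtain ⟨-, -, G, hG, h₀, h₁⟩ := hf.2.1 i
  exact hf.eq_union_of_subset hG h₀ h₁ ▸ hG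

theorem union_ne (hf : T.IsZigzagSeq f) (i : ℕ) : f i ∪ f (i + 1) ≠ f (i + 1) ∪ f (i + 2) :=
  hf.2.2.1 i _ (hf.union_mem_faces i) _ (hf.union_mem_faces (i + 1))
    subset_union_left subset_union_right subset_union_left subset_union_right

theorem disjoint_add_two (hf : T.IsZigzagSeq f) (i : ℕ) : Disjoint (f i) (f (i + 2)) :=
  disjoint_iff_inter_eq_empty.mpr (hf.2.2.2 i)

theorem seq_add_two_eq_sdiff (hf : T.IsZigzagSeq f) {i : ℕ} {B : Finset V} (hB : B ∈ T.faces)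
    (h : f (i + 1) ⊆ B) (hB' : B ≠ f i ∪ f (i + 1)) : f (i + 2) = B \ f i := by
  obtain rfl : B = f (i + 1) ∪ f (i + 2) :=
    (T.eq_or_eq_of_subset (hf.card_eq_two _) (hf.union_mem_faces i) (hf.union_mem_faces (i + 1))
      hB subset_union_right subset_union_left h (hf.union_ne i)).resolve_left hB'
  exact eq_sdiff_of_subset (T.card_eq _ hB) (hf.card_eq_two _) subset_union_left
    subset_union_right (hf.2.1 i).2.1 (hf.disjoint_add_two i)

theorem seq_eq_sdiff (hf : T.IsZigzagSeq f) {i : ℕ} {B : Finset V} (hB : B ∈ T.faces)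
    (h : f (i + 1) ⊆ B) (hB' : B ≠ f (i + 1) ∪ f (i + 2)) : f i = B \ f (i + 2) := by
  obtain rfl : B = f i ∪ f (i + 1) :=
    (T.eq_or_eq_of_subset (hf.card_eq_two _) (hf.union_mem_faces (i + 1)) (hf.union_mem_faces i)
      hB subset_union_left subset_union_right h (hf.union_ne i).symm).resolve_left hB'
  exact eq_sdiff_of_subset (T.card_eq _ hB) (hf.card_eq_two _) subset_union_right
    subset_union_left (inter_comm (f (i + 1)) _ ▸ (hf.2.1 (i + 1)).2.1)
    (hf.disjoint_add_two i).symm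

theorem seq_add_two_eq (hf : T.IsZigzagSeq f) (hg : T.IsZigzagSeq g) {i j : ℕ}
    (h₀ : f i = g j) (h₁ : f (i + 1) = g (j + 1)) : f (i + 2) = g (j + 2) := by
  rw [hf.seq_add_two_eq_sdiff (hg.union_mem_faces (j + 1)) (h₁ ▸ subset_union_left)
    (by rw [h₀, h₁]; exact (hg.union_ne j).symm), h₀,
    ← hg.seq_add_two_eq_sdiff (hg.union_mem_faces (j + 1)) subset_union_left
      (hg.union_ne j).symm]

theorem seq_add_two_eq_of_rev (hf : T.IsZigzagSeq f) (hg : T.IsZigzagSeq g) {i j : ℕ}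
    (h₀ : f i = g (j + 2)) (h₁ : f (i + 1) = g (j + 1)) : f (i + 2) = g j := by
  rw [hf.seq_add_two_eq_sdiff (hg.union_mem_faces j) (h₁ ▸ subset_union_right)
    (by rw [h₀, h₁, union_comm (g (j + 2))]; exact hg.union_ne j), h₀,
    ← hg.seq_eq_sdiff (hg.union_mem_faces j) subset_union_right (hg.union_ne j)]

theorem seq_add_eq (hf : T.IsZigzagSeq f) (hg : T.IsZigzagSeq g) {i j : ℕ}
    (h₀ : f i = g j) (h₁ : f (i + 1) = g (j + 1)) (d : ℕ) : f (i + d) = g (j + d) := by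
  induction d generalizing i j with
  | zero => exact h₀
  | succ d ih =>
    rw [← add_assoc, add_right_comm, ← add_assoc, add_right_comm j]
    exact ih h₁ (hf.seq_add_two_eq hg h₀ h₁)

theorem seq_add_eq_of_rev (hf : T.IsZigzagSeq f) (hg : T.IsZigzagSeq g) {i j : ℕ} (d : ℕ)
    (h₀ : f i = g (j + d + 1)) (h₁ : f (i + 1) = g (j + d)) : f (i + d + 1) = g j := by
  induction d generalizing i with
  | zero => exact h₁
  | succ d ih =>
    rw [add_right_comm i, ← add_assoc]
    exact ih h₁ (hf.seq_add_two_eq_of_rev hg h₀ h₁)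

end IsZigzagSeq

namespace Zigzag

variable (Z : T.Zigzag)

theorem periodic_seq : Function.Periodic Z.seq Z.period := Z.periodic

theorem period_dvd {d : ℕ} (h : Function.Periodic Z.seq d) : Z.period ∣ d := by
  have hmod : Function.Periodic Z.seq (d % Z.period) := fun n => by
    rw [← (Z.periodic_seq.nat_mul (d / Z.period)) (n + d % Z.period), add_assoc,
      Nat.cast_id, Nat.mod_add_div', h]
  by_contra hd
  have := Z.period_min _ (Nat.pos_of_ne_zero (mt Nat.dvd_of_mod_eq_zero hd)) hmod
  exact absurd (Nat.mod_lt d Z.period_pos) (not_lt.mpr this)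

variable {Z}

theorem periodic_of_seq_eq {a b : ℕ} (hab : a ≤ b) (h₀ : Z.seq a = Z.seq b)
    (h₁ : Z.seq (a + 1) = Z.seq (b + 1)) : Function.Periodic Z.seq (b - a) := by
  have hshift : Function.Periodic (fun n => Z.seq (n + (b - a))) Z.period := fun n => by
    simp only [add_right_comm n Z.period, Z.periodic]
  have key := hshift.eq_of_eventuallyEq Z.periodic_seq Z.period_pos Z.period_pos <|
    Filter.eventually_atTop.mpr ⟨a, fun n hn => by
      obtain ⟨d, rfl⟩ := Nat.exists_eq_add_of_le hn
      show Z.seq (a + d + (b - a)) = _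
      rw [show a + d + (b - a) = b + d by omega]
      exact (Z.isZigzag.seq_add_eq Z.isZigzag h₀ h₁ d).symm⟩
  exact congrFun key

theorem eq_of_seq_eq {a b : ℕ} (h₀ : Z.seq a = Z.seq b) (h₁ : Z.seq (a + 1) = Z.seq (b + 1))
    (hab : a < b + Z.period) (hba : b < a + Z.period) : a = b := by
  wlog hle : a ≤ b generalizing a b
  · exact (this h₀.symm h₁.symm hba hab (le_of_not_ge hle)).symm
  have := Nat.eq_zero_of_dvd_of_lt (Z.period_dvd (periodic_of_seq_eq hle h₀ h₁)) (by omega)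
  omega

theorem equiv_of_seq_eq_s6 {Z' : T.Zigzag} {u s : ℕ} (h₀ : Z'.seq s = Z.seq u)
    (h₁ : Z'.seq (s + 1) = Z.seq (u + 1)) : Z.Equiv Z' := by
  have hs : s ≤ s * Z.period := Nat.le_mul_of_pos_right s Z.period_pos
  refine ⟨u + s * Z.period - s, congrFun <| Z'.periodic_seq.eq_of_eventuallyEq
    (g := fun n => Z.seq (n + (u + s * Z.period - s)))
    (fun n => by simp only [add_right_comm n Z.period, Z.periodic]) Z'.period_pos
    Z.period_pos <|
    Filter.eventually_atTop.mpr ⟨s, fun n hn => ?_⟩⟩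
  obtain ⟨d, rfl⟩ := Nat.exists_eq_add_of_le hn
  show Z'.seq (s + d) = Z.seq (s + d + (u + s * Z.period - s))
  rw [Z'.isZigzag.seq_add_eq Z.isZigzag h₀ h₁ d, ← (Z.periodic_seq.nat_mul s) (u + d),
    Nat.cast_id, show s + d + (u + s * Z.period - s) = u + d + s * Z.period by omega]

theorem isReverseOf_of_seq_eq_s6 {Z' : T.Zigzag} {u s : ℕ} (h₀ : Z'.seq s = Z.seq (u + 1))
    (h₁ : Z'.seq (s + 1) = Z.seq u) : Z'.IsReverseOf Z := by
  refine ⟨u + s + 1, congrFun <| Z'.periodic_seq.eq_of_eventuallyEq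
    (g := fun n => Z.seq (u + s + 1 + Z.period - n % Z.period))
    (fun n => by simp only [Nat.add_mod_right]) Z'.period_pos Z.period_pos <|
    Filter.eventually_atTop.mpr ⟨s + 1, fun n hn => ?_⟩⟩
  obtain ⟨d, rfl⟩ : ∃ d, n = s + d + 1 := ⟨n - s - 1, by omega⟩
  have hdiv := Nat.div_add_mod (s + d + 1) Z.period
  have hlt := Nat.mod_lt (s + d + 1) Z.period_pos
  set q := (s + d + 1) / Z.period
  set r := (s + d + 1) % Z.period
  have hidx : u + s + 1 + Z.period - r + d = u + (q + 1) * Z.period := by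
    rw [add_one_mul, mul_comm q]; omega
  refine Z'.isZigzag.seq_add_eq_of_rev Z.isZigzag d ?_ ?_
  · rw [hidx, add_right_comm, ← Nat.cast_id (q + 1), (Z.periodic_seq.nat_mul (q + 1)) (u + 1)]
    exact h₀
  · rw [hidx, ← Nat.cast_id (q + 1), (Z.periodic_seq.nat_mul (q + 1)) u]
    exact h₁

variable {G : Finset V} {k : ℕ}

theorem shadowAt_iff : Z.ShadowAt k G ↔ Z.seq k ∪ Z.seq (k + 1) = G :=
  ⟨fun h => (Z.isZigzag.eq_union_of_subset h.1 h.2.1 h.2.2).symm,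
    fun h => h ▸ ⟨Z.isZigzag.union_mem_faces k, subset_union_left, subset_union_right⟩⟩

theorem not_shadowAt_succ (h : Z.ShadowAt k G) : ¬ Z.ShadowAt (k + 1) G :=
  fun h' => Z.isZigzag.2.2.1 k G h.1 G h'.1 h.2.1 h.2.2 h'.2.1 h'.2.2 rfl

theorem shadowAt_or_shadowAt_succ (hG : G ∈ T.faces) (h : Z.seq (k + 1) ⊆ G) :
    Z.ShadowAt k G ∨ Z.ShadowAt (k + 1) G := by
  rcases T.eq_or_eq_of_subset (Z.isZigzag.card_eq_two _) (Z.isZigzag.union_mem_faces k)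
    (Z.isZigzag.union_mem_faces (k + 1)) hG subset_union_right subset_union_left h
    (Z.isZigzag.union_ne k) with rfl | rfl
  · exact .inl (shadowAt_iff.mpr rfl)
  · exact .inr (shadowAt_iff.mpr rfl)

theorem exists_passes_of_shadowAt (h : Z.ShadowAt k G) : ∃ α ∈ G, ∃ β ∈ G, Z.Passes k α β := by
  obtain ⟨v, hv⟩ := (Z.isZigzag.2.1 k).2.1
  rw [mem_inter] at hv
  obtain ⟨c, hc, hcv⟩ :=
    exists_mem_ne (s := Z.seq k) (by rw [Z.isZigzag.card_eq_two]; omega) v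
  have hseq : Z.seq k = {c, v} :=
    (eq_of_subset_of_card_le (by simp [insert_subset_iff, hc, hv.1])
      (by rw [Z.isZigzag.card_eq_two, card_pair hcv])).symm
  exact ⟨c, h.2.1 hc, v, h.2.1 hv.1, hseq, hcv, hv.2⟩

theorem notMem_seq_add_two {v : V} (h : v ∈ Z.seq k) : v ∉ Z.seq (k + 2) :=
  disjoint_left.mp (Z.isZigzag.disjoint_add_two k) h

def Traverses (Z : T.Zigzag) (k : ℕ) (z a b : V) : Prop :=
  Z.seq k = {z, a} ∧ Z.seq (k + 1) = {a, b}

variable {z a b : V}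

theorem Traverses.shadowAt (h : Z.Traverses k z a b) (hF : F ∈ T.faces) (hz : z ∈ F)
    (ha : a ∈ F) (hb : b ∈ F) : Z.ShadowAt k F :=
  ⟨hF, h.1 ▸ by simp [insert_subset_iff, hz, ha], h.2 ▸ by simp [insert_subset_iff, ha, hb]⟩

theorem Traverses.add_period (h : Z.Traverses k z a b) : Z.Traverses (k + Z.period) z a b := by
  rwa [Traverses, add_right_comm, Z.periodic, Z.periodic]

theorem Traverses.eq {k' : ℕ} (h : Z.Traverses k z a b) (h' : Z.Traverses k' z a b)
    (hk : k < k' + Z.period) (hk' : k' < k + Z.period) : k = k' :=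
  eq_of_seq_eq (h.1.trans h'.1.symm) (h.2.trans h'.2.symm) hk hk'

theorem Traverses.succ {x y t w : V} (h : Z.Traverses k t x y) (hF : F ∈ T.faces)
    (hx : x ∈ F) (hy : y ∈ F) (hw : w ∈ F) (hxy : x ≠ y) (hxw : x ≠ w) (hyw : y ≠ w)
    (ht : t ∉ F) :
    Z.Traverses (k + 1) x y w := by
  have hsh : Z.ShadowAt (k + 1) F :=
    (shadowAt_or_shadowAt_succ hF (h.2 ▸ by simp [insert_subset_iff, hx, hy])).resolve_left
      fun hk => ht (hk.2.1 (h.1 ▸ mem_insert_self t _))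
  exact ⟨h.2, eq_pair_of_subset_of_notMem (Z.isZigzag.card_eq_two _)
    (T.face_eq_of_mem hF hx hy hw hxy hxw hyw ▸ hsh.2.2)
    (notMem_seq_add_two (h.1 ▸ mem_insert_of_mem (mem_singleton_self x)))⟩

theorem Traverses.pred {x y t w : V} (h : Z.Traverses (k + 1) x y t) (hF : F ∈ T.faces)
    (hx : x ∈ F) (hy : y ∈ F) (hw : w ∈ F) (hxy : x ≠ y) (hxw : x ≠ w) (hyw : y ≠ w)
    (ht : t ∉ F) :
    Z.Traverses k w x y := by
  have hsh : Z.ShadowAt k F :=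
    (shadowAt_or_shadowAt_succ hF (h.1 ▸ by simp [insert_subset_iff, hx, hy])).resolve_right
      fun hk => ht (hk.2.2 (h.2 ▸ mem_insert_of_mem (mem_singleton_self t)))
  refine ⟨eq_pair_of_subset_of_notMem (Z.isZigzag.card_eq_two _)
    (T.face_eq_of_mem hF hy hw hx hyw hxy.symm hxw.symm ▸ hsh.2.1) fun hyk => ?_, h.1⟩
  exact notMem_seq_add_two hyk (h.2 ▸ mem_insert_self y _)

variable {n : ℕ}

/-- `MonodromyRel` is witnessed by one zigzag through the corner `z, a, b`; by determinism it can
be read along any zigzag through that corner. -/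
theorem Traverses.exists_passes_of_monodromyRel (hn : Z.Traverses n z a b) (hF : F ∈ T.faces)
    (hz : z ∈ F) (hza : z ≠ a) (hzb : z ≠ b) (hab : a ≠ b) {u v : V}
    (hR : T.MonodromyRel F a b u v) :
    ∃ m, n + 1 < m ∧ Z.Passes m u v ∧ ∀ k, n < k → k < m → ¬ Z.ShadowAt k F := by
  obtain ⟨ha, hb, Z₀, i₀, j₀, ⟨z₀, hz₀, hz₀a, hz₀b, hP₀⟩, hP₁, hij, hPj, -, -, hfree⟩ := hR
  obtain rfl := eq_of_mem_of_ne_of_ne hF ha hb hz hab hza.symm hzb.symm hz₀ hz₀a hz₀b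
  have hagree : ∀ d, Z₀.seq (i₀ + d) = Z.seq (n + d) :=
    Z₀.isZigzag.seq_add_eq Z.isZigzag (hP₀.1.trans hn.1.symm) (hP₁.1.trans hn.2.symm)
  have hpasses : ∀ d α β, Z₀.Passes (i₀ + d) α β ↔ Z.Passes (n + d) α β := fun d α β => by
    simp only [Passes, add_assoc, hagree]
  refine ⟨n + (j₀ - i₀), by omega, ?_, fun k hnk hkm hsh => ?_⟩
  · exact (hpasses _ u v).mp (by rwa [Nat.add_sub_cancel' (by omega : i₀ ≤ j₀)])
  · rcases Nat.lt_or_ge (n + 1) k with hk | hk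
    · obtain ⟨α, hα, β, hβ, hP⟩ := exists_passes_of_shadowAt hsh
      refine hfree (i₀ + (k - n)) (by omega) (by omega) α β hα hβ ((hpasses _ α β).mpr ?_)
      rwa [Nat.add_sub_cancel' hnk.le]
    · obtain rfl : k = n + 1 := by omega
      exact not_shadowAt_succ (hn.shadowAt hF hz ha hb) hsh

theorem Traverses.exists_next_of_mfIsId (hn : Z.Traverses n z a b) (hF : F ∈ T.faces)
    (hM : T.MFIsId F) (hz : z ∈ F) (ha : a ∈ F) (hb : b ∈ F) (hza : z ≠ a) (hzb : z ≠ b)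
    (hab : a ≠ b) :
    ∃ m, n + 1 < m ∧ Z.Traverses m a b z ∧ ∀ k, n < k → k < m → ¬ Z.ShadowAt k F := by
  obtain ⟨m, hnm, hm, hfree⟩ :=
    hn.exists_passes_of_monodromyRel hF hz hza hzb hab (hM a b ha hb hab)
  have hnm' : n + 2 ≠ m := fun h => notMem_seq_add_two (hn.1 ▸ mem_insert_of_mem
    (mem_singleton_self a)) (h ▸ hm.1 ▸ mem_insert_self a {b})
  obtain ⟨m, rfl⟩ : ∃ m', m = m' + 1 := ⟨m - 1, by omega⟩
  have hsh : Z.ShadowAt (m + 1) F :=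
    (shadowAt_or_shadowAt_succ hF (by rw [hm.1]; simp [insert_subset_iff, ha, hb]))
      |>.resolve_left (hfree m (by omega) (by omega))
  have ha' : a ∉ Z.seq (m + 1 + 1) := fun ha' => (Z.isZigzag.2.1 (m + 1)).1 <| hm.1.trans
    (eq_of_subset_of_card_le (s := {a, b}) (by simp [insert_subset_iff, ha', hm.2.2])
      (by rw [Z.isZigzag.card_eq_two, card_pair hab]))
  exact ⟨m + 1, hnm, ⟨hm.1, eq_pair_of_subset_of_notMem (Z.isZigzag.card_eq_two _)
    (T.face_eq_of_mem hF ha hb hz hab hza.symm hzb.symm ▸ hsh.2.2) ha'⟩, hfree⟩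

theorem Traverses.exists_cycle_of_mfIsId {i : ℕ} (hi : Z.Traverses i z a b) (hF : F ∈ T.faces)
    (hM : T.MFIsId F) (hz : z ∈ F) (ha : a ∈ F) (hb : b ∈ F) (hza : z ≠ a) (hzb : z ≠ b)
    (hab : a ≠ b) :
    ∃ j j₂, i + 1 < j ∧ j < j₂ ∧ j₂ < i + Z.period ∧ Z.Traverses j a b z ∧
      Z.Traverses j₂ b z a ∧
      ∀ k, i ≤ k → k < i + Z.period → Z.ShadowAt k F → k = i ∨ k = j ∨ k = j₂ := by
  obtain ⟨j, hij, hj, hfree₁⟩ := hi.exists_next_of_mfIsId hF hM hz ha hb hza hzb hab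
  obtain ⟨j₂, hjj₂, hj₂, hfree₂⟩ :=
    hj.exists_next_of_mfIsId hF hM ha hb hz hab hza.symm hzb.symm
  obtain ⟨j₃, hj₂j₃, hj₃, hfree₃⟩ :=
    hj₂.exists_next_of_mfIsId hF hM hb hz ha hzb.symm hab.symm hza
  have hshadows : ∀ k, i ≤ k → k < j₃ → Z.ShadowAt k F → k = i ∨ k = j ∨ k = j₂ := by
    intro k hik hkj₃ hsh
    by_contra! hk
    rcases lt_or_gt_of_ne hk.2.1 with hkj | hkj
    · exact hfree₁ k (by omega) hkj hsh
    rcases lt_or_gt_of_ne hk.2.2 with hkj₂ | hkj₂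
    · exact hfree₂ k hkj hkj₂ hsh
    · exact hfree₃ k hkj₂ hkj₃ hsh
  have hij₃ : i + Z.period ≤ j₃ := by
    have := Nat.le_of_dvd (by omega) <| Z.period_dvd <|
      periodic_of_seq_eq (by omega) (hi.1.trans hj₃.1.symm) (hi.2.trans hj₃.2.symm)
    omega
  refine ⟨j, j₂, hij, by omega, ?_, hj, hj₂, fun k hik hkP => hshadows k hik (by omega)⟩
  by_contra! hj₂P
  have hiP := hi.add_period
  have hz' : z ∈ Z.seq (i + Z.period) := hiP.1 ▸ mem_insert_self z {a}
  have ha' : a ∈ Z.seq (i + Z.period) := hiP.1 ▸ mem_insert_of_mem (mem_singleton_self a)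
  rcases hshadows _ (by omega) (by omega) (hiP.shadowAt hF hz ha hb) with h | h | h
  · exact absurd h (by have := Z.period_pos; omega)
  · rw [h, hj.1] at hz'
    simp [hza, hzb] at hz'
  · rw [h, hj₂.1] at ha'
    simp [hab, hza.symm] at ha'

theorem Traverses.equiv_or_isReverseOf {Z' : T.Zigzag} {i j j₂ s : ℕ}
    (hi : Z.Traverses i z a b) (hj : Z.Traverses j a b z) (hj₂ : Z.Traverses j₂ b z a)
    (hF : F ∈ T.faces) (hz : z ∈ F) (ha : a ∈ F) (hb : b ∈ F) (hza : z ≠ a) (hzb : z ≠ b)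
    (hab : a ≠ b) (hs : Z'.ShadowAt s F) : Z.Equiv Z' ∨ Z'.IsReverseOf Z := by
  have hFeq := T.face_eq_of_mem hF hz ha hb hza hzb hab
  have hne := (Z'.isZigzag.2.1 s).1
  rcases eq_pair_of_subset_triple (Z'.isZigzag.card_eq_two s) (hFeq ▸ hs.2.1)
    with h₀ | h₀ | h₀ <;>
  rcases eq_pair_of_subset_triple (Z'.isZigzag.card_eq_two (s + 1)) (hFeq ▸ hs.2.2)
    with h₁ | h₁ | h₁
  · exact absurd (h₀.trans h₁.symm) hne
  · exact .inl (equiv_of_seq_eq_s6 (h₀.trans hi.1.symm) (h₁.trans hi.2.symm))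
  · exact .inr (isReverseOf_of_seq_eq_s6 (h₀.trans hj₂.2.symm) (h₁.trans hj₂.1.symm))
  · exact .inr (isReverseOf_of_seq_eq_s6 (h₀.trans hi.2.symm) (h₁.trans hi.1.symm))
  · exact absurd (h₀.trans h₁.symm) hne
  · exact .inl (equiv_of_seq_eq_s6 (h₀.trans hj.1.symm) (h₁.trans hj.2.symm))
  · exact .inl (equiv_of_seq_eq_s6 (h₀.trans hj₂.1.symm) (h₁.trans hj₂.2.symm))
  · exact .inr (isReverseOf_of_seq_eq_s6 (h₀.trans hj.2.symm) (h₁.trans hj.1.symm))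
  · exact absurd (h₀.trans h₁.symm) hne

end Zigzag

theorem MFIsId.exists_traverses (hM : T.MFIsId F) (hF : F ∈ T.faces) {x y t : V}
    (hx : x ∈ F) (hy : y ∈ F) (ht : t ∈ F) (hxy : x ≠ y) (hxt : x ≠ t) (hyt : y ≠ t) :
    ∃ (Z : T.Zigzag) (i : ℕ), Z.Traverses i t x y := by
  obtain ⟨-, -, Z, i, -, ⟨z, hz, hzx, hzy, hP₀⟩, hP₁, -⟩ := hM x y hx hy hxy
  obtain rfl := eq_of_mem_of_ne_of_ne hF hx hy ht hxy hxt hyt hz hzx hzy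
  exact ⟨Z, i, hP₀.1, hP₁.1⟩

end Triangulation

theorem adjacent_M1_faces_shadow_general {V : Type} [Fintype V] [DecidableEq V]
    (T : Triangulation V) (F F' : Finset V)
    (hF : F ∈ T.faces) (hF' : F' ∈ T.faces)
    (hadj : (F ∩ F').card = 2)
    (h1 : T.MFIsId F) (h1' : T.MFIsId F') :
    ∃ Z : T.Zigzag, ∃ a₁ a₂ a₃ b₁ b₂ b₃ : ℕ,
      a₁ < b₁ ∧ b₁ < b₂ ∧ b₂ < b₃ ∧ b₃ < a₂ ∧ a₂ < a₃ ∧ a₃ < a₁ + Z.period ∧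
      Z.ShadowAt a₁ F ∧ Z.ShadowAt a₂ F ∧ Z.ShadowAt a₃ F ∧
      Z.ShadowAt b₁ F' ∧ Z.ShadowAt b₂ F' ∧ Z.ShadowAt b₃ F' ∧
      (∀ i, a₁ ≤ i → i < a₁ + Z.period → Z.ShadowAt i F →
        i = a₁ ∨ i = a₂ ∨ i = a₃) ∧
      (∀ i, a₁ ≤ i → i < a₁ + Z.period → Z.ShadowAt i F' →
        i = b₁ ∨ i = b₂ ∨ i = b₃) ∧
      (∀ Z' : T.Zigzag, (∃ i, Z'.ShadowAt i F) → (∃ j, Z'.ShadowAt j F') →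
        Z.Equiv Z' ∨ Z'.IsReverseOf Z) := by
  obtain ⟨x, y, hxy, hFF'⟩ := card_eq_two.mp hadj
  have hx := mem_inter.mp (hFF' ▸ mem_insert_self x {y})
  have hy := mem_inter.mp (hFF' ▸ mem_insert_of_mem (mem_singleton_self y))
  obtain ⟨t, ht, htx, hty⟩ := Triangulation.exists_mem_ne_ne hF x y
  obtain ⟨w, hw, hwx, hwy⟩ := Triangulation.exists_mem_ne_ne hF' x y
  have ht' : t ∉ F' := fun ht' => by
    have := hFF' ▸ mem_inter.mpr ⟨ht, ht'⟩
    simp [htx, hty] at this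
  obtain ⟨Z, i, hi⟩ := h1.exists_traverses hF hx.1 hy.1 ht hxy htx.symm hty.symm
  have hi' := hi.succ hF' hx.2 hy.2 hw hxy hwx.symm hwy.symm ht'
  obtain ⟨j, j₂, hij, hjj₂, hj₂i, hj, hj₂, hshF⟩ :=
    hi.exists_cycle_of_mfIsId hF h1 ht hx.1 hy.1 htx hty hxy
  obtain ⟨m, m₂, him, hmm₂, hm₂i, hm, hm₂, hshF'⟩ :=
    hi'.exists_cycle_of_mfIsId hF' h1' hx.2 hy.2 hw hxy hwx.symm hwy.symm
  obtain ⟨j, rfl⟩ : ∃ j', j = j' + 1 := ⟨j - 1, by omega⟩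
  obtain rfl : j = m₂ :=
    (hj.pred hF' hx.2 hy.2 hw hxy hwx.symm hwy.symm ht').eq hm₂ (by omega) (by omega)
  refine ⟨Z, i, j + 1, j₂, i + 1, m, j, by omega, by omega, hmm₂, by omega, hjj₂, hj₂i,
    hi.shadowAt hF ht hx.1 hy.1, hj.shadowAt hF hx.1 hy.1 ht, hj₂.shadowAt hF hy.1 ht hx.1,
    hi'.shadowAt hF' hx.2 hy.2 hw, hm.shadowAt hF' hy.2 hw hx.2, hm₂.shadowAt hF' hw hx.2 hy.2,
    hshF, fun k hik hkP hk => ?_, fun _ ⟨_, hs⟩ _ =>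
      hi.equiv_or_isReverseOf hj hj₂ hF ht hx.1 hy.1 htx hty hxy hs⟩
  rcases hik.eq_or_lt with rfl | hik
  · exact absurd (hk.2.1 (hi.1 ▸ mem_insert_self t {x})) ht'
  · exact hshF' k hik (by omega) hk

/-- if `F, F'` are adjacent faces whose z-monodromies are both
the identity, then there is a unique (up to reversal) zigzag whose face
shadow contains `F` and `F'`, and in its face shadow the three occurrences
of `F'` all lie between the first and the second occurrence of `F`. -/
theorem adjacent_M1_faces_shadow {V : Type} [Fintype V] [DecidableEq V]
    (T : Triangulation V) (F F' : Finset V)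
    (hF : F ∈ T.faces) (hF' : F' ∈ T.faces) (hne : F ≠ F')
    (hadj : (F ∩ F').card = 2)
    (h1 : T.MFIsId F) (h1' : T.MFIsId F') :
    ∃ Z : T.Zigzag, ∃ a₁ a₂ a₃ b₁ b₂ b₃ : ℕ,
      a₁ < b₁ ∧ b₁ < b₂ ∧ b₂ < b₃ ∧ b₃ < a₂ ∧ a₂ < a₃ ∧ a₃ < a₁ + Z.period ∧
      Z.ShadowAt a₁ F ∧ Z.ShadowAt a₂ F ∧ Z.ShadowAt a₃ F ∧
      Z.ShadowAt b₁ F' ∧ Z.ShadowAt b₂ F' ∧ Z.ShadowAt b₃ F' ∧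
      (∀ i, a₁ ≤ i → i < a₁ + Z.period → Z.ShadowAt i F →
        i = a₁ ∨ i = a₂ ∨ i = a₃) ∧
      (∀ i, a₁ ≤ i → i < a₁ + Z.period → Z.ShadowAt i F' →
        i = b₁ ∨ i = b₂ ∨ i = b₃) ∧
      (∀ Z' : T.Zigzag, (∃ i, Z'.ShadowAt i F) → (∃ j, Z'.ShadowAt j F') →
        Z.Equiv Z' ∨ Z'.IsReverseOf Z) :=
  adjacent_M1_faces_shadow_general T F F' hF hF' hadj h1 h1'
end
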